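/- Let s be a strict square root on a pseudo MV-algebra M (i.e., s(0) = s(0)⁻). Then for every x ∈ M: s(x)⁻ ∨ s(x)∼ ≤ s(0), s(0) ⊕ s(x) = s(x) ⊕ s(0) = 1, and every Boolean element b with s(0) ≤ b ≤ 1 equals 1 (provided 0 ≠ 1). -/

import Mathlib

/-- A pseudo MV-algebra `(M; ⊕, ⁻, ∼, 0, 1)` satisfying axioms (A1)–(A8),
with `x ⊙ y := (y⁻ ⊕ x⁻)∼`. -/
class PseudoMV (M : Type*) where
  oplus : M → M → M
  lneg : M → M
  rneg : M → M
  zero : M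
  one : M
  oplus_assoc : ∀ x y z : M, oplus x (oplus y z) = oplus (oplus x y) z
  oplus_zero : ∀ x : M, oplus x zero = x
  zero_oplus : ∀ x : M, oplus zero x = x
  oplus_one : ∀ x : M, oplus x one = one
  one_oplus : ∀ x : M, oplus one x = one
  lneg_one : lneg one = zero
  rneg_one : rneg one = zero
  a5 : ∀ x y : M, rneg (oplus (lneg x) (lneg y)) = lneg (oplus (rneg x) (rneg y))
  a6₁ : ∀ x y : M,
    oplus x (rneg (oplus (lneg y) (lneg (rneg x)))) =
      oplus y (rneg (oplus (lneg x) (lneg (rneg y))))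
  a6₂ : ∀ x y : M,
    oplus x (rneg (oplus (lneg y) (lneg (rneg x)))) =
      oplus (rneg (oplus (lneg (lneg y)) (lneg x))) y
  a6₃ : ∀ x y : M,
    oplus x (rneg (oplus (lneg y) (lneg (rneg x)))) =
      oplus (rneg (oplus (lneg (lneg x)) (lneg y))) x
  a7 : ∀ x y : M,
    rneg (oplus (lneg (oplus (lneg x) y)) (lneg x)) =
      rneg (oplus (lneg y) (lneg (oplus x (rneg y))))
  a8 : ∀ x : M, rneg (lneg x) = x

namespace PseudoMV

variable {M : Type*} [PseudoMV M]

/-- `x ⊙ y := (y⁻ ⊕ x⁻)∼`. -/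
def mul (x y : M) : M := rneg (oplus (lneg y) (lneg x))

/-- `x ∨ y = x ⊕ (x∼ ⊙ y)` (axiom (A6)). -/
def sup (x y : M) : M := oplus x (mul (rneg x) y)

/-- `x ∧ y = x ⊙ (x⁻ ⊕ y)` (axiom (A7)). -/
def inf (x y : M) : M := mul x (oplus (lneg x) y)

/-- The lattice order of a pseudo MV-algebra. -/
def le (x y : M) : Prop := sup x y = y

/-- `x → y := x⁻ ⊕ y`. -/
def arrow (x y : M) : M := oplus (lneg x) y

/-- `x ⇝ y := y ⊕ x∼`. -/
def squig (x y : M) : M := oplus y (rneg x)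

/-- A weak square root: (Sq1) and (Sq2). -/
def IsWeakSqrt (r : M → M) : Prop :=
  (∀ x : M, mul (r x) (r x) = x) ∧
  (∀ x y : M, le (mul y y) x → le y (r x))

/-- A square root: (Sq1), (Sq2) and (Sq3). -/
def IsSqrt (r : M → M) : Prop :=
  IsWeakSqrt r ∧
  (∀ x : M, r (lneg x) = arrow (r x) (r zero) ∧ r (rneg x) = squig (r x) (r zero))

end PseudoMV


/-!
By (Sq2), `s 0` is the least value of a square root `s`, since `(s 0) ⊙ (s 0) = 0 ≤ x`;
strictness makes `s 0` its own left and right negation. So `s 0 ≤ s x` reads `s 0 ⊕ s x = 1` and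
`s x ⊕ s 0 = 1`, whence `s x ⊕ s x = 1`. Then `(s x)⁻ ⊙ (s x)⁻ = (s x ⊕ s x)⁻ = 0`, so (Sq2) puts
`(s x)⁻`, and likewise `(s x)∼`, below `s 0`. An idempotent `b ≥ s 0` satisfies
`b = b ⊕ b ≥ s 0 ⊕ s 0 = 1`.
-/

namespace PseudoMV

variable {M : Type*} [PseudoMV M]

theorem lneg_rneg (x : M) : lneg (rneg x) = x := by
  have h := a5 x (one : M)
  rw [lneg_one, rneg_one, oplus_zero, oplus_zero] at h
  rw [← h, a8]

theorem lneg_zero : lneg (zero : M) = one := by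
  rw [← rneg_one, lneg_rneg]

theorem rneg_eq_self_of_lneg_eq_self {a : M} (h : lneg a = a) : rneg a = a := by
  conv_lhs => rw [← h]
  exact a8 a

theorem lneg_oplus (a b : M) :
    lneg (oplus a b) = rneg (oplus (lneg (lneg a)) (lneg (lneg b))) := by
  rw [a5, a8, a8]

theorem oplus_rneg_self (x : M) : oplus x (rneg x) = one := by
  simpa only [lneg_one, zero_oplus, a8, one_oplus] using a6₁ x (one : M)

theorem lneg_oplus_self (x : M) : oplus (lneg x) x = one := by
  simpa only [one_oplus, lneg_one, oplus_zero, a8] using (a6₂ (one : M) x).symm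

theorem sup_eq_oplus_rneg (x y : M) : sup x y = oplus y (rneg (oplus (lneg x) y)) := by
  rw [sup, mul, a6₁, lneg_rneg]

theorem sup_eq_lneg_oplus (x y : M) : sup x y = oplus (lneg (oplus y (rneg x))) y := by
  rw [lneg_oplus y (rneg x), lneg_rneg]
  exact a6₂ x y

theorem sup_eq_lneg_oplus_left (x y : M) : sup x y = oplus (lneg (oplus x (rneg y))) x := by
  rw [lneg_oplus x (rneg y), lneg_rneg]
  exact a6₃ x y

theorem le_iff_lneg_oplus_eq_one {x y : M} : le x y ↔ oplus (lneg x) y = one := by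
  constructor
  · intro h
    rw [← h, sup, oplus_assoc, lneg_oplus_self, one_oplus]
  · intro h
    rw [le, sup_eq_oplus_rneg, h, rneg_one, oplus_zero]

theorem le_iff_oplus_rneg_eq_one {x y : M} : le x y ↔ oplus y (rneg x) = one := by
  constructor
  · intro h
    have hsup := sup_eq_lneg_oplus_left x y
    rw [h] at hsup
    rw [hsup, ← oplus_assoc, oplus_rneg_self, oplus_one]
  · intro h
    rw [le, sup_eq_lneg_oplus, h, lneg_one, zero_oplus]

protected theorem le_refl (x : M) : le x x :=
  le_iff_lneg_oplus_eq_one.2 (lneg_oplus_self x)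

protected theorem zero_le (x : M) : le zero x :=
  le_iff_lneg_oplus_eq_one.2 (by rw [lneg_zero, one_oplus])

theorem oplus_eq_one_of_le_right {p q b : M} (h : le p q) (h1 : oplus b p = one) :
    oplus b q = one := by
  rw [← h, sup, oplus_assoc, h1, one_oplus]

theorem oplus_eq_one_of_le_left {p q b : M} (h : le p q) (h1 : oplus p b = one) :
    oplus q b = one := by
  have hsup := sup_eq_lneg_oplus_left p q
  rw [h] at hsup
  rw [hsup, ← oplus_assoc, h1, oplus_one]

theorem lneg_le_lneg {x y : M} (h : le x y) : le (lneg y) (lneg x) :=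
  le_iff_oplus_rneg_eq_one.2 (by rw [a8]; exact le_iff_lneg_oplus_eq_one.1 h)

theorem rneg_le_rneg {x y : M} (h : le x y) : le (rneg y) (rneg x) :=
  le_iff_lneg_oplus_eq_one.2 (by rw [lneg_rneg]; exact le_iff_oplus_rneg_eq_one.1 h)

theorem oplus_le_oplus_right {a b : M} (c : M) (h : le a b) :
    le (oplus a c) (oplus b c) := by
  have hrneg : le (rneg a) (oplus c (rneg (oplus a c))) :=
    le_iff_lneg_oplus_eq_one.2 (by rw [lneg_rneg, oplus_assoc, oplus_rneg_self])
  rw [le_iff_oplus_rneg_eq_one, ← oplus_assoc]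
  exact oplus_eq_one_of_le_right hrneg (le_iff_oplus_rneg_eq_one.1 h)

theorem oplus_le_oplus_left {a b : M} (c : M) (h : le a b) :
    le (oplus c a) (oplus c b) := by
  have hlneg : le (lneg a) (oplus (lneg (oplus c a)) c) :=
    le_iff_oplus_rneg_eq_one.2 (by rw [a8, ← oplus_assoc, lneg_oplus_self])
  rw [le_iff_lneg_oplus_eq_one, oplus_assoc]
  exact oplus_eq_one_of_le_left hlneg (le_iff_lneg_oplus_eq_one.1 h)

protected theorem mul_le_mul_left {a b : M} (c : M) (h : le a b) : le (mul c a) (mul c b) :=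
  rneg_le_rneg (oplus_le_oplus_right (lneg c) (lneg_le_lneg h))

protected theorem sup_le {u v c : M} (hu : le u c) (hv : le v c) : le (sup u v) c := by
  have h := oplus_le_oplus_left u (PseudoMV.mul_le_mul_left (rneg u) hv)
  rwa [← sup, ← sup, hu] at h

theorem mul_lneg_lneg_eq_zero {a : M} (h : oplus a a = one) :
    mul (lneg a) (lneg a) = zero := by
  rw [mul, ← lneg_oplus, h, lneg_one]

theorem mul_rneg_rneg_eq_zero {a : M} (h : oplus a a = one) :
    mul (rneg a) (rneg a) = zero := by
  rw [mul, lneg_rneg, h, rneg_one]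

namespace IsWeakSqrt

variable {r : M → M}

theorem sqrt_zero_le (hr : IsWeakSqrt r) (x : M) : le (r zero) (r x) :=
  hr.2 x (r zero) (by rw [hr.1 zero]; exact PseudoMV.zero_le x)

theorem le_sqrt_zero_of_mul_self_eq_zero (hr : IsWeakSqrt r) {y : M} (hy : mul y y = zero) :
    le y (r zero) :=
  hr.2 zero y (by rw [hy]; exact PseudoMV.le_refl zero)

theorem sqrt_zero_oplus_eq_one (hr : IsWeakSqrt r) (hstrict : r zero = lneg (r zero))
    (x : M) : oplus (r zero) (r x) = one := by
  have h := le_iff_lneg_oplus_eq_one.1 (hr.sqrt_zero_le x)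
  rwa [← hstrict] at h

theorem oplus_sqrt_zero_eq_one (hr : IsWeakSqrt r) (hstrict : r zero = lneg (r zero))
    (x : M) : oplus (r x) (r zero) = one := by
  have h := le_iff_oplus_rneg_eq_one.1 (hr.sqrt_zero_le x)
  rwa [rneg_eq_self_of_lneg_eq_self hstrict.symm] at h

theorem sqrt_oplus_self_eq_one (hr : IsWeakSqrt r) (hstrict : r zero = lneg (r zero))
    (x : M) : oplus (r x) (r x) = one :=
  oplus_eq_one_of_le_right (hr.sqrt_zero_le x) (oplus_sqrt_zero_eq_one hr hstrict x)

theorem sup_lneg_rneg_le_sqrt_zero (hr : IsWeakSqrt r) (hstrict : r zero = lneg (r zero))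
    (x : M) : le (sup (lneg (r x)) (rneg (r x))) (r zero) :=
  PseudoMV.sup_le
    (hr.le_sqrt_zero_of_mul_self_eq_zero
      (mul_lneg_lneg_eq_zero (sqrt_oplus_self_eq_one hr hstrict x)))
    (hr.le_sqrt_zero_of_mul_self_eq_zero
      (mul_rneg_rneg_eq_zero (sqrt_oplus_self_eq_one hr hstrict x)))

theorem eq_one_of_oplus_self_eq_self (hr : IsWeakSqrt r) (hstrict : r zero = lneg (r zero))
    {b : M} (hbool : oplus b b = b) (hb : le (r zero) b) : b = one := by
  have hb1 : oplus b (r zero) = one :=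
    oplus_eq_one_of_le_left hb (sqrt_zero_oplus_eq_one hr hstrict zero)
  rw [← hbool]
  exact oplus_eq_one_of_le_right hb hb1

end IsWeakSqrt

end PseudoMV

open PseudoMV

theorem stmt14 {M : Type*} [PseudoMV M] (s : M → M) (hs : IsSqrt s)
    (hstrict : s zero = lneg (s zero)) :
    (∀ x : M, le (sup (lneg (s x)) (rneg (s x))) (s zero) ∧
      oplus (s zero) (s x) = one ∧ oplus (s x) (s zero) = one) ∧
    ((zero : M) ≠ one →
      ∀ b : M, oplus b b = b → le (s zero) b → le b one → b = one) := by
  obtain ⟨hs, -⟩ := hs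
  exact ⟨fun x => ⟨hs.sup_lneg_rneg_le_sqrt_zero hstrict x,
      hs.sqrt_zero_oplus_eq_one hstrict x, hs.oplus_sqrt_zero_eq_one hstrict x⟩,
    fun _ _ hbool hb _ => hs.eq_one_of_oplus_self_eq_self hstrict hbool hb⟩
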